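/- arXiv:1807.11256 — 8 statements merged into one kernel-verified Lean document; each statement's English description precedes it below -/
import Mathlib

section
/- Rule (cdm): Let C be a distributive category and T a strongly guarded monad on C. If g : X → TY is any Kleisli morphism and f : Y → TZ is σ-guarded for a summand σ of Z, then the Kleisli composite f* ∘ g : X → TZ is σ-guarded. -/
open CategoryTheory Limits

universe v u

variable (C : Type u) [Category.{v} C] [HasFiniteProducts C] [HasFiniteCoproducts C]

/-- The canonical distributivity morphism `(X × Y) + (X × Z) ⟶ X × (Y + Z)`. -/
noncomputable def distCan (X Y Z : C) : (X ⨯ Y) ⨿ (X ⨯ Z) ⟶ X ⨯ (Y ⨿ Z) :=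
  coprod.desc (prod.map (𝟙 X) coprod.inl) (prod.map (𝟙 X) coprod.inr)

/-- A distributive category: the canonical morphism
`(X × Y) + (X × Z) ⟶ X × (Y + Z)` is an isomorphism. -/
class Distributive : Prop where
  isIso : ∀ X Y Z : C, IsIso (distCan C X Y Z)

attribute [instance] Distributive.isIso

/-- The inverse `dist` of the canonical distributivity morphism. -/
noncomputable def distInv [Distributive C] (X Y Z : C) :
    X ⨯ (Y ⨿ Z) ⟶ (X ⨯ Y) ⨿ (X ⨯ Z) :=
  inv (distCan C X Y Z)

/-- A monad on `C` presented as a Kleisli triple. -/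
structure KMonad where
  obj : C → C
  η : ∀ X : C, X ⟶ obj X
  bind : ∀ {X Y : C}, (X ⟶ obj Y) → (obj X ⟶ obj Y)
  bind_η : ∀ X : C, bind (η X) = 𝟙 (obj X)
  η_bind : ∀ {X Y : C} (f : X ⟶ obj Y), η X ≫ bind f = f
  bind_bind : ∀ {X Y Z : C} (f : X ⟶ obj Y) (g : Y ⟶ obj Z),
      bind (f ≫ bind g) = bind f ≫ bind g

variable {C}

/-- The functorial action of a Kleisli triple. -/
def KMonad.map (M : KMonad C) {X Y : C} (f : X ⟶ Y) : M.obj X ⟶ M.obj Y :=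
  M.bind (f ≫ M.η Y)

variable (C)

/-- A strong monad on a category with finite products: a Kleisli triple together
with a strength satisfying the standard coherence conditions. -/
structure SMonad extends KMonad C where
  τ : ∀ X Y : C, X ⨯ obj Y ⟶ obj (X ⨯ Y)
  τ_natural : ∀ {X X' Y Y' : C} (f : X ⟶ X') (g : Y ⟶ Y'),
      prod.map f (bind (g ≫ η Y')) ≫ τ X' Y'
        = τ X Y ≫ bind (prod.map f g ≫ η (X' ⨯ Y'))
  τ_η : ∀ X Y : C, prod.map (𝟙 X) (η Y) ≫ τ X Y = η (X ⨯ Y)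
  τ_bind : ∀ {X Y Z : C} (f : Y ⟶ obj Z),
      prod.map (𝟙 X) (bind f) ≫ τ X Z = τ X Y ≫ bind (prod.map (𝟙 X) f ≫ τ X Z)
  τ_unitor : ∀ Y : C, τ (⊤_ C) Y ≫ bind (prod.snd ≫ η Y) = prod.snd
  τ_assoc : ∀ X Y Z : C,
      (prod.associator X Y (obj Z)).hom ≫ prod.map (𝟙 X) (τ Y Z) ≫ τ X (Y ⨯ Z) ≫
          bind ((prod.associator X Y Z).inv ≫ η ((X ⨯ Y) ⨯ Z))
        = τ (X ⨯ Y) Z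

variable {C}

/-- The morphism `δ = T dist⁻¹ ∘ τ : X × T(Y+Z) ⟶ T(X×Y + X×Z)`. -/
noncomputable def SMonad.δ [Distributive C] (M : SMonad C) (X Y Z : C) :
    X ⨯ M.obj (Y ⨿ Z) ⟶ M.obj ((X ⨯ Y) ⨿ (X ⨯ Z)) :=
  M.τ X (Y ⨿ Z) ≫ M.toKMonad.map (distInv C X Y Z)

variable (C)

/-- A (coproduct) summand `Y' ↪ Y`: a complement `compl` together with an
isomorphism `Y' ⨿ compl ≅ Y`.  The injection is `Summand.ι`. -/
structure Summand (Y' Y : C) where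
  compl : C
  iso : Y' ⨿ compl ≅ Y

namespace Summand

variable {C}

/-- The summand injection `Y' ⟶ Y`. -/
noncomputable def ι {Y' Y : C} (σ : Summand C Y' Y) : Y' ⟶ Y :=
  coprod.inl ≫ σ.iso.hom

/-- The complement injection. -/
noncomputable def ι' {Y' Y : C} (σ : Summand C Y' Y) : σ.compl ⟶ Y :=
  coprod.inr ≫ σ.iso.hom

variable (C)

/-- The canonical left summand `Y ↪ Y ⨿ Z`. -/
noncomputable def inlS (Y Z : C) : Summand C Y (Y ⨿ Z) :=
  ⟨Z, Iso.refl _⟩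

/-- The canonical right summand `Z ↪ Y ⨿ Z`. -/
noncomputable def inrS (Y Z : C) : Summand C Z (Y ⨿ Z) :=
  ⟨Y, coprod.braiding Z Y⟩

variable {C}

/-- Transport of a summand along an isomorphism of the ambient object. -/
noncomputable def ofIso {Y' Y Z : C} (σ : Summand C Y' Y) (θ : Y ≅ Z) : Summand C Y' Z :=
  ⟨σ.compl, σ.iso ≪≫ θ⟩

/-- Composition of summands: a summand of a summand is a summand. -/
noncomputable def comp {Y'' Y' Y : C} (σ : Summand C Y' Y) (θ : Summand C Y'' Y') :
    Summand C Y'' Y :=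
  ⟨θ.compl ⨿ σ.compl,
    (coprod.associator Y'' θ.compl σ.compl).symm ≪≫
      coprod.mapIso θ.iso (Iso.refl σ.compl) ≪≫ σ.iso⟩

/-- The summand `σ + id_Z : Y' ⨿ Z ↪ Y ⨿ Z` induced by `σ : Y' ↪ Y`. -/
noncomputable def sumId {Y' Y : C} (σ : Summand C Y' Y) (Z : C) :
    Summand C (Y' ⨿ Z) (Y ⨿ Z) :=
  ⟨σ.compl,
    coprod.associator Y' Z σ.compl ≪≫
      coprod.mapIso (Iso.refl Y') (coprod.braiding Z σ.compl) ≪≫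
      (coprod.associator Y' σ.compl Z).symm ≪≫
      coprod.mapIso σ.iso (Iso.refl Z)⟩

/-- The summand `id_W × σ : W × Y' ↪ W × Y` (using distributivity). -/
noncomputable def prodLeft [Distributive C] {Y' Y : C} (σ : Summand C Y' Y) (W : C) :
    Summand C (W ⨯ Y') (W ⨯ Y) :=
  ⟨W ⨯ σ.compl, asIso (distCan C W Y' σ.compl) ≪≫ prod.mapIso (Iso.refl W) σ.iso⟩

/-- The union summand `[inl ∘ inr , inr] : X ⨿ X ↪ (Y ⨿ X) ⨿ X`
used in the codiagonal law. -/
noncomputable def codiagS (Y X : C) : Summand C (X ⨿ X) ((Y ⨿ X) ⨿ X) :=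
  ⟨Y, coprod.braiding (X ⨿ X) Y ≪≫ (coprod.associator Y X X).symm⟩

end Summand

/-- A notion of abstract guardedness on a strong monad, closed under the rules
(trv), (sum), (cmp) and (str): a strongly guarded monad. -/
structure GuardStruct [Distributive C] (M : SMonad C) where
  Guarded : ∀ {X Y' Y : C}, (X ⟶ M.obj Y) → Summand C Y' Y → Prop
  trv : ∀ {X Y Z : C} (f : X ⟶ M.obj Y),
      Guarded (f ≫ M.toKMonad.map (coprod.inl : Y ⟶ Y ⨿ Z)) (Summand.inrS C Y Z)
  sum : ∀ {X Y Z' Z : C} (f : X ⟶ M.obj Z) (g : Y ⟶ M.obj Z) (σ : Summand C Z' Z),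
      Guarded f σ → Guarded g σ → Guarded (coprod.desc f g) σ
  cmp : ∀ {X Y Z V' V : C} (f : X ⟶ M.obj (Y ⨿ Z)) (g : Y ⟶ M.obj V) (h : Z ⟶ M.obj V)
      (σ : Summand C V' V), Guarded f (Summand.inrS C Y Z) → Guarded g σ →
      Guarded (f ≫ M.bind (coprod.desc g h)) σ
  str : ∀ {X Y' Y : C} (W : C) (f : X ⟶ M.obj Y) (σ : Summand C Y' Y),
      Guarded f σ → Guarded (prod.map (𝟙 W) f ≫ M.τ W Y) (σ.prodLeft W)

theorem KMonad.map_comp_bind {C : Type u} [Category.{v} C] (M : KMonad C) {X Y Z : C}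
    (u : X ⟶ Y) (f : Y ⟶ M.obj Z) : M.map u ≫ M.bind f = M.bind (u ≫ f) := by
  rw [map, ← M.bind_bind, Category.assoc, M.η_bind]

/-- Rule (cdm): the Kleisli composite of an arbitrary morphism `g : X ⟶ TY`
with a `σ`-guarded morphism `f : Y ⟶ TZ` is `σ`-guarded. -/
theorem guarded_cdm {C : Type u} [Category.{v} C] [HasFiniteProducts C]
    [HasFiniteCoproducts C] [Distributive C] (M : SMonad C) (G : GuardStruct C M)
    {X Y Z' Z : C} (g : X ⟶ M.obj Y) (f : Y ⟶ M.obj Z) (σ : Summand C Z' Z)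
    (hf : G.Guarded f σ) :
    G.Guarded (g ≫ M.bind f) σ := by
  -- `f* ∘ g = [f, f]* ∘ T inl ∘ g`, and `T inl ∘ g` is `inr`-guarded by (trv), so (cmp) applies.
  have h := G.cmp _ f f σ (G.trv (Z := Y) g) hf
  rwa [Category.assoc, M.map_comp_bind, coprod.inl_desc] at h
end

section
/- Let C be a distributive category and T a strongly guarded pre-iterative monad on C. Then for every object W the extension T^W of T to C[W], with the same notion of guardedness, is guarded pre-iterative when equipped with strong iteration f ↦ f^‡ = (T(snd+id)∘δ∘⟨fst,f⟩)^†; in particular f^‡ satisfies the fixpoint law in C[W]. If moreover T satisfies uniformity, then all functors C[k] (for k : W → V), as well as the functors J^W, preserve iteration. -/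
/-
Strong iteration is ordinary iteration of `strongBody M f`, a loop that carries the
context `W` along. The fixpoint law of `f^‡` in `C[W]` is the fixpoint law of `†`
for this body, once the projection `snd` at the exit is absorbed into the
continuation. Reindexing the context along `k : W ⟶ V` (resp. forgetting it via `snd`)
commutes with the body up to `T(id + k × id)` (resp. `T(id + snd)`), so uniformity
transfers the iterates.
-/

open CategoryTheory Limits

universe v u

variable (C : Type u) [Category.{v} C] [HasFiniteProducts C] [HasFiniteCoproducts C]

variable {C}

variable (C)

variable {C}

variable (C)

/-- A guarded pre-iterative monad: a guarded iteration operator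
satisfying the fixpoint law. -/
structure PreIter [Distributive C] (M : SMonad C) (G : GuardStruct C M) where
  iter : ∀ {X Y : C} (f : X ⟶ M.obj (Y ⨿ X)),
      G.Guarded f (Summand.inrS C Y X) → (X ⟶ M.obj Y)
  fixpoint : ∀ {X Y : C} (f : X ⟶ M.obj (Y ⨿ X)) (hf : G.Guarded f (Summand.inrS C Y X)),
      iter f hf = f ≫ M.bind (coprod.desc (M.η Y) (iter f hf))

variable {C}

/-- The body of the strong iteration operator:
`T(snd + id) ∘ δ ∘ ⟨fst, f⟩ : W × X ⟶ T(Y + W × X)`. -/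
noncomputable def strongBody [Distributive C] (M : SMonad C) {W X Y : C}
    (f : W ⨯ X ⟶ M.obj (Y ⨿ X)) : W ⨯ X ⟶ M.obj (Y ⨿ (W ⨯ X)) :=
  prod.lift prod.fst f ≫ M.δ W Y X ≫
    M.toKMonad.map (coprod.map prod.snd (𝟙 (W ⨯ X)))

variable (C)

/-- A guarded Elgot monad: a guarded pre-iterative monad additionally satisfying
naturality, codiagonal, uniformity and strength. -/
structure Elgot [Distributive C] (M : SMonad C) (G : GuardStruct C M)
    extends PreIter C M G where
  naturality : ∀ {X Y Z : C} (f : X ⟶ M.obj (Y ⨿ X)) (g : Y ⟶ M.obj Z)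
      (hf : G.Guarded f (Summand.inrS C Y X))
      (hf' : G.Guarded (f ≫ M.bind (coprod.desc (g ≫ M.toKMonad.map coprod.inl)
        (coprod.inr ≫ M.η (Z ⨿ X)))) (Summand.inrS C Z X)),
      iter f hf ≫ M.bind g
        = iter (f ≫ M.bind (coprod.desc (g ≫ M.toKMonad.map coprod.inl)
            (coprod.inr ≫ M.η (Z ⨿ X)))) hf'
  codiagonal : ∀ {X Y : C} (f : X ⟶ M.obj ((Y ⨿ X) ⨿ X))
      (hf : G.Guarded f (Summand.codiagS Y X))
      (h₁ : G.Guarded (f ≫ M.toKMonad.map (coprod.desc (𝟙 (Y ⨿ X)) coprod.inr))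
        (Summand.inrS C Y X))
      (h₂ : G.Guarded f (Summand.inrS C (Y ⨿ X) X))
      (h₃ : G.Guarded (iter f h₂) (Summand.inrS C Y X)),
      iter (f ≫ M.toKMonad.map (coprod.desc (𝟙 (Y ⨿ X)) coprod.inr)) h₁
        = iter (iter f h₂) h₃
  uniformity : ∀ {X Y Z : C} (f : X ⟶ M.obj (Y ⨿ X)) (g : Z ⟶ M.obj (Y ⨿ Z)) (h : Z ⟶ X)
      (hf : G.Guarded f (Summand.inrS C Y X)) (hg : G.Guarded g (Summand.inrS C Y Z)),
      h ≫ f = g ≫ M.toKMonad.map (coprod.map (𝟙 Y) h) →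
      h ≫ iter f hf = iter g hg
  strength : ∀ {X Y : C} (W : C) (f : X ⟶ M.obj (Y ⨿ X))
      (hf : G.Guarded f (Summand.inrS C Y X))
      (hf' : G.Guarded (prod.map (𝟙 W) f ≫ M.δ W Y X)
        (Summand.inrS C (W ⨯ Y) (W ⨯ X))),
      prod.map (𝟙 W) (iter f hf) ≫ M.τ W Y = iter (prod.map (𝟙 W) f ≫ M.δ W Y X) hf'


section StrongIteration

variable {C : Type u} [Category.{v} C]

theorem KMonad.map_bind (M : KMonad C) {X Y Z : C} (g : X ⟶ Y) (h : Y ⟶ M.obj Z) :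
    M.map g ≫ M.bind h = M.bind (g ≫ h) := by
  rw [KMonad.map, ← M.bind_bind, Category.assoc, M.η_bind]

theorem KMonad.map_comp (M : KMonad C) {X Y Z : C} (g : X ⟶ Y) (h : Y ⟶ Z) :
    M.map g ≫ M.map h = M.map (g ≫ h) := by
  simp only [KMonad.map, ← M.bind_bind, Category.assoc, M.η_bind]

variable [HasFiniteProducts C]

theorem SMonad.τ_natural_left (M : SMonad C) {X X' Y : C} (f : X ⟶ X') :
    prod.map f (𝟙 (M.obj Y)) ≫ M.τ X' Y = M.τ X Y ≫ M.toKMonad.map (prod.map f (𝟙 Y)) := by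
  simpa only [Category.id_comp, M.bind_η, KMonad.map] using M.τ_natural f (𝟙 Y)

/-- Via naturality in the context, this reduces to the unit law `τ_unitor` at `⊤_ C`. -/
theorem SMonad.τ_map_snd (M : SMonad C) (X Y : C) :
    M.τ X Y ≫ M.toKMonad.map (prod.snd : X ⨯ Y ⟶ Y) = prod.snd := by
  have hsnd : (prod.map (terminal.from X) (𝟙 Y) ≫ prod.snd : X ⨯ Y ⟶ Y) = prod.snd := by
    simp
  calc M.τ X Y ≫ M.toKMonad.map prod.snd
      = M.τ X Y ≫ M.toKMonad.map (prod.map (terminal.from X) (𝟙 Y)) ≫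
          M.toKMonad.map prod.snd := by rw [KMonad.map_comp, hsnd]
    _ = prod.map (terminal.from X) (𝟙 (M.obj Y)) ≫ M.τ (⊤_ C) Y ≫
          M.toKMonad.map prod.snd := by rw [reassoc_of% M.τ_natural_left]
    _ = prod.snd := by rw [KMonad.map, M.τ_unitor, prod.map_snd, Category.comp_id]

variable [HasFiniteCoproducts C]

theorem distCan_comp_snd (X Y Z : C) :
    distCan C X Y Z ≫ prod.snd = coprod.map prod.snd prod.snd := by
  apply coprod.hom_ext <;> simp [distCan]

theorem distInv_comp_map_snd [Distributive C] (X Y Z : C) :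
    distInv C X Y Z ≫ coprod.map prod.snd prod.snd = (prod.snd : X ⨯ (Y ⨿ Z) ⟶ Y ⨿ Z) := by
  rw [distInv, IsIso.inv_comp_eq, distCan_comp_snd]

theorem distCan_natural_left {X X' : C} (k : X ⟶ X') (Y Z : C) :
    coprod.map (prod.map k (𝟙 Y)) (prod.map k (𝟙 Z)) ≫ distCan C X' Y Z
      = distCan C X Y Z ≫ prod.map k (𝟙 (Y ⨿ Z)) := by
  apply coprod.hom_ext <;> simp [distCan]

theorem distInv_natural_left [Distributive C] {X X' : C} (k : X ⟶ X') (Y Z : C) :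
    prod.map k (𝟙 (Y ⨿ Z)) ≫ distInv C X' Y Z
      = distInv C X Y Z ≫ coprod.map (prod.map k (𝟙 Y)) (prod.map k (𝟙 Z)) := by
  rw [distInv, distInv, IsIso.comp_inv_eq, Category.assoc, distCan_natural_left,
    IsIso.inv_hom_id_assoc]

variable [Distributive C] (M : SMonad C)

theorem SMonad.δ_natural_left {X X' : C} (k : X ⟶ X') (Y Z : C) :
    prod.map k (𝟙 (M.obj (Y ⨿ Z))) ≫ M.δ X' Y Z
      = M.δ X Y Z ≫ M.toKMonad.map (coprod.map (prod.map k (𝟙 Y)) (prod.map k (𝟙 Z))) := by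
  rw [SMonad.δ, SMonad.δ, ← Category.assoc, M.τ_natural_left, Category.assoc,
    KMonad.map_comp, distInv_natural_left, Category.assoc, KMonad.map_comp]

theorem SMonad.δ_map_snd (X Y Z : C) :
    M.δ X Y Z ≫ M.toKMonad.map (coprod.map (prod.snd : X ⨯ Y ⟶ Y) (prod.snd : X ⨯ Z ⟶ Z))
      = prod.snd := by
  rw [SMonad.δ, Category.assoc, KMonad.map_comp, distInv_comp_map_snd, M.τ_map_snd]

theorem strongBody_bind_desc {W X Y : C} (f : W ⨯ X ⟶ M.obj (Y ⨿ X))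
    (g : W ⨯ X ⟶ M.obj Y) :
    strongBody M f ≫ M.bind (coprod.desc (M.η Y) g)
      = prod.lift prod.fst f ≫ M.δ W Y X ≫ M.bind (coprod.desc (prod.snd ≫ M.η Y) g) := by
  have hdesc : coprod.map (prod.snd : W ⨯ Y ⟶ Y) (𝟙 (W ⨯ X)) ≫ coprod.desc (M.η Y) g
      = coprod.desc (prod.snd ≫ M.η Y) g := by
    apply coprod.hom_ext <;> simp
  simp only [strongBody, Category.assoc, KMonad.map_bind, hdesc]

theorem prod_map_comp_strongBody {V W X Y : C} (k : W ⟶ V) (f : V ⨯ X ⟶ M.obj (Y ⨿ X)) :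
    prod.map k (𝟙 X) ≫ strongBody M f
      = strongBody M (prod.map k (𝟙 X) ≫ f) ≫
          M.toKMonad.map (coprod.map (𝟙 Y) (prod.map k (𝟙 X))) := by
  have hlift : prod.map k (𝟙 X) ≫ prod.lift prod.fst f
      = prod.lift prod.fst (prod.map k (𝟙 X) ≫ f) ≫ prod.map k (𝟙 (M.obj (Y ⨿ X))) := by
    apply prod.hom_ext <;> simp
  have hsnd : coprod.map (prod.map k (𝟙 Y)) (prod.map k (𝟙 X)) ≫
        coprod.map prod.snd (𝟙 (V ⨯ X))
      = coprod.map prod.snd (𝟙 (W ⨯ X)) ≫ coprod.map (𝟙 Y) (prod.map k (𝟙 X)) := by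
    apply coprod.hom_ext <;> simp
  simp only [strongBody, Category.assoc]
  rw [reassoc_of% hlift, reassoc_of% M.δ_natural_left, KMonad.map_comp, hsnd,
    KMonad.map_comp]

theorem strongBody_snd_comp_map {W X Y : C} (f : X ⟶ M.obj (Y ⨿ X)) :
    strongBody M (prod.snd ≫ f : W ⨯ X ⟶ _) ≫ M.toKMonad.map (coprod.map (𝟙 Y) prod.snd)
      = prod.snd ≫ f := by
  have hsnd : coprod.map prod.snd (𝟙 (W ⨯ X)) ≫ coprod.map (𝟙 Y) prod.snd
      = coprod.map (prod.snd : W ⨯ Y ⟶ Y) (prod.snd : W ⨯ X ⟶ X) := by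
    apply coprod.hom_ext <;> simp
  rw [strongBody, Category.assoc, Category.assoc, KMonad.map_comp, hsnd, M.δ_map_snd,
    prod.lift_snd]

end StrongIteration

/-- For a strongly guarded pre-iterative monad `T`, the extension `T^W` of `T`
to the simple slice `C[W]` (with the same notion of guardedness), equipped with
strong iteration `f^‡ = (T(snd+id) ∘ δ ∘ ⟨fst,f⟩)^†`, is guarded pre-iterative:
`f^‡` satisfies the fixpoint law of `C[W]`.  If moreover the iteration of `T`
satisfies uniformity, then all functors `C[k]` and `J^W` preserve iteration. -/
theorem slice_preiterative {C : Type u} [Category.{v} C] [HasFiniteProducts C]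
    [HasFiniteCoproducts C] [Distributive C] (M : SMonad C) (G : GuardStruct C M)
    (P : PreIter C M G) (W : C) :
    (∀ {X Y : C} (f : W ⨯ X ⟶ M.obj (Y ⨿ X))
       (hf : G.Guarded f (Summand.inrS C Y X))
       (h' : G.Guarded (strongBody M f) (Summand.inrS C Y (W ⨯ X))),
       P.iter (strongBody M f) h'
         = prod.lift prod.fst f ≫ M.δ W Y X ≫
             M.bind (coprod.desc (prod.snd ≫ M.η Y) (P.iter (strongBody M f) h')))
    ∧ ((∀ {X Y Z : C} (f : X ⟶ M.obj (Y ⨿ X)) (g : Z ⟶ M.obj (Y ⨿ Z)) (h : Z ⟶ X)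
          (hf : G.Guarded f (Summand.inrS C Y X)) (hg : G.Guarded g (Summand.inrS C Y Z)),
          h ≫ f = g ≫ M.toKMonad.map (coprod.map (𝟙 Y) h) →
          h ≫ P.iter f hf = P.iter g hg) →
        ((∀ (V : C) (k : W ⟶ V) {X Y : C} (f : V ⨯ X ⟶ M.obj (Y ⨿ X))
            (hf : G.Guarded f (Summand.inrS C Y X))
            (h₁ : G.Guarded (strongBody M f) (Summand.inrS C Y (V ⨯ X)))
            (h₂ : G.Guarded (strongBody M (prod.map k (𝟙 X) ≫ f))
              (Summand.inrS C Y (W ⨯ X))),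
            prod.map k (𝟙 X) ≫ P.iter (strongBody M f) h₁
              = P.iter (strongBody M (prod.map k (𝟙 X) ≫ f)) h₂)
         ∧ (∀ {X Y : C} (f : X ⟶ M.obj (Y ⨿ X))
            (hf : G.Guarded f (Summand.inrS C Y X))
            (h' : G.Guarded (strongBody M (prod.snd ≫ f : W ⨯ X ⟶ _))
              (Summand.inrS C Y (W ⨯ X))),
            prod.snd ≫ P.iter f hf
              = P.iter (strongBody M (prod.snd ≫ f)) h'))) := by
  refine ⟨fun f _ h' => ?_, fun uniform => ⟨?_, ?_⟩⟩
  · rw [← strongBody_bind_desc]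
    exact P.fixpoint (strongBody M f) h'
  · intro V k X Y f _ h₁ h₂
    exact uniform _ _ _ h₁ h₂ (prod_map_comp_strongBody M k f)
  · intro X Y f hf h'
    exact uniform f _ prod.snd hf h' (strongBody_snd_comp_map M f).symm
end

section
/- Let C be a distributive category and T a strongly guarded monad on C that is guarded iterative, i.e. every inr-guarded f : X →_2 T(Y+X) has a unique solution f^† of the fixpoint law f^† = [η, f^†]*∘f. Then for every object W the extension T^W of T to the simple slice C[W], with the same notion of guardedness and with iteration given by strong iteration, is again guarded iterative: for every inr-guarded f : W×X →_2 T(Y+X), f^‡ = (T(snd+id)∘δ∘⟨fst,f⟩)^† is the unique g : W×X → TY with g = [η∘snd, g]*∘δ∘⟨fst,f⟩. -/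
/-!
Precomposing with `T(snd + id)` turns `[η, g]*` into `[η ∘ snd, g]*`, so the fixpoint law of
`C[W]` for `g` is literally the fixpoint law of `C` for the strong body `strongBody M f`;
existence and uniqueness of solutions therefore transfer from `T` to `T^W`.
-/

open CategoryTheory Limits

universe v u

variable (C : Type u) [Category.{v} C] [HasFiniteProducts C] [HasFiniteCoproducts C]

variable {C}

variable (C)

variable {C}

variable (C)

variable {C}

variable (C)

variable {C}

theorem KMonad.map_bind_s8 {𝒟 : Type*} [Category 𝒟] (M : KMonad 𝒟) {A B D : 𝒟} (h : A ⟶ B)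
    (k : B ⟶ M.obj D) :
    M.map h ≫ M.bind k = M.bind (h ≫ k) := by
  rw [KMonad.map, ← M.bind_bind, Category.assoc, M.η_bind]

theorem strongBody_bind [Distributive C] (M : SMonad C) {W X Y Z : C}
    (f : W ⨯ X ⟶ M.obj (Y ⨿ X)) (a : Y ⟶ M.obj Z) (b : W ⨯ X ⟶ M.obj Z) :
    strongBody M f ≫ M.bind (coprod.desc a b)
      = prod.lift prod.fst f ≫ M.δ W Y X ≫ M.bind (coprod.desc (prod.snd ≫ a) b) := by
  rw [strongBody, Category.assoc, Category.assoc, KMonad.map_bind_s8, coprod.map_desc,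
    Category.id_comp]

/-- If `T` is guarded iterative (every `inr`-guarded `f` has a unique solution
of the fixpoint law), then the extension `T^W` to the simple slice `C[W]`,
with the same guardedness and with iteration given by strong iteration, is
again guarded iterative: `f^‡ = (T(snd+id) ∘ δ ∘ ⟨fst,f⟩)^†` is the unique
`g` with `g = [η ∘ snd, g]* ∘ δ ∘ ⟨fst,f⟩`. -/
theorem slice_guarded_iterative {C : Type u} [Category.{v} C] [HasFiniteProducts C]
    [HasFiniteCoproducts C] [Distributive C] (M : SMonad C) (G : GuardStruct C M)
    (P : PreIter C M G)
    (huniq : ∀ {X Y : C} (f : X ⟶ M.obj (Y ⨿ X)) (hf : G.Guarded f (Summand.inrS C Y X))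
        (g : X ⟶ M.obj Y), g = f ≫ M.bind (coprod.desc (M.η Y) g) → g = P.iter f hf) :
    ∀ (W : C) {X Y : C} (f : W ⨯ X ⟶ M.obj (Y ⨿ X))
      (hf : G.Guarded f (Summand.inrS C Y X))
      (h' : G.Guarded (strongBody M f) (Summand.inrS C Y (W ⨯ X))),
      (P.iter (strongBody M f) h'
          = prod.lift prod.fst f ≫ M.δ W Y X ≫
              M.bind (coprod.desc (prod.snd ≫ M.η Y) (P.iter (strongBody M f) h')))
      ∧ ∀ g : W ⨯ X ⟶ M.obj Y,
          g = prod.lift prod.fst f ≫ M.δ W Y X ≫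
                M.bind (coprod.desc (prod.snd ≫ M.η Y) g) →
          g = P.iter (strongBody M f) h' := by
  intro W X Y f _ h'
  constructor
  · rw [← strongBody_bind]
    exact P.fixpoint (strongBody M f) h'
  · intro g hg
    exact huniq (strongBody M f) h' g (by rwa [strongBody_bind])
end

section
/- Let C be a distributive category and T a monad on C. Suppose T extends coherently to monads T^W on all simple slices C[W], in the sense that each T^W lifts T along the co-Kleisli adjunction (so that T^1 agrees with T under C ≅ C[1]) and C[k]∘T^V = T^W∘C[k] for every k : W → V, with C[k] preserving the monad structure. Then T is a strong monad, with strength τ_{W,X} : W×TX → T(W×X) given by T^W j_X, where j_X is the identity W×X → W×X viewed as a C[W]-morphism X → W×X. -/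
open CategoryTheory Limits

universe v u

variable (C : Type u) [Category.{v} C] [HasFiniteProducts C] [HasFiniteCoproducts C]

variable {C}

variable (C)

variable {C}

variable (C)

/-! The strength is `T^W` applied to the generic map `j_X : X ⟶ W ⨯ X` of `C[W]`. Its unit and
multiplication laws are the monad laws of `T^W` read through the lifting equations, and naturality
in `W` and the associativity law both come from coherence with reindexing: along `k` for the
former, along the two projections out of `W ⨯ X` for the latter. -/

lemma CategoryTheory.Limits.prod.lift_fst_snd_comp {C : Type u} [Category.{v} C] {W X Y : C}
    [HasBinaryProduct W X] [HasBinaryProduct W Y] (f : X ⟶ Y) :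
    prod.lift prod.fst (prod.snd ≫ f) = prod.map (𝟙 W) f := by
  rw [← prod.lift_fst_comp_snd_comp, Category.comp_id]

/-- Coherent extensions of `M` to the simple slices `C[W]`, in Kleisli form. The lifting
condition forces the unit of `T^W` to be `prod.snd ≫ M.η X`, so only the binds are data:
`map_η_bind` and `bind_bind` are the monad laws of `T^W`, `bind_snd` is the lifting of `M.bind`
and `map_bind` the preservation of binds by `C[k]`. -/
structure SliceLifting {C : Type u} [Category.{v} C] [HasFiniteProducts C] (M : KMonad C) where
  bind : ∀ (W : C) {X Y : C}, (W ⨯ X ⟶ M.obj Y) → (W ⨯ M.obj X ⟶ M.obj Y)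
  map_η_bind : ∀ (W : C) {X Y : C} (f : W ⨯ X ⟶ M.obj Y),
    prod.map (𝟙 W) (M.η X) ≫ bind W f = f
  bind_bind : ∀ (W : C) {X Y Z : C} (f : W ⨯ X ⟶ M.obj Y) (g : W ⨯ Y ⟶ M.obj Z),
    bind W (prod.lift prod.fst f ≫ bind W g) = prod.lift prod.fst (bind W f) ≫ bind W g
  bind_snd : ∀ (W : C) {X Y : C} (f : X ⟶ M.obj Y),
    bind W (prod.snd ≫ f) = prod.snd ≫ M.bind f
  map_bind : ∀ {W V : C} (k : W ⟶ V) {X Y : C} (f : V ⨯ X ⟶ M.obj Y),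
    prod.map k (𝟙 (M.obj X)) ≫ bind V f = bind W (prod.map k (𝟙 X) ≫ f)

namespace SliceLifting

variable {C : Type u} [Category.{v} C] [HasFiniteProducts C] {M : KMonad C}
  (L : SliceLifting M)

lemma bind_comp_kbind (W : C) {X Y Z : C} (f : W ⨯ X ⟶ M.obj Y) (g : Y ⟶ M.obj Z) :
    L.bind W f ≫ M.bind g = L.bind W (f ≫ M.bind g) := by
  have hf : f ≫ M.bind g = prod.lift prod.fst f ≫ L.bind W (prod.snd ≫ g) := by
    rw [L.bind_snd, prod.lift_snd_assoc]
  rw [hf, L.bind_bind, L.bind_snd, prod.lift_snd_assoc]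

lemma lift_comp_η_bind (W : C) {X V Y : C} (u : W ⨯ X ⟶ V) (f : W ⨯ V ⟶ M.obj Y) :
    prod.lift prod.fst (u ≫ M.η V) ≫ L.bind W f = prod.lift prod.fst u ≫ f := by
  have hsplit :
      prod.lift prod.fst (u ≫ M.η V) = prod.lift prod.fst u ≫ prod.map (𝟙 W) (M.η V) := by
    rw [prod.lift_map, Category.comp_id]
  rw [hsplit, Category.assoc, L.map_η_bind]

/-- `T^W j_X`: the Kleisli form of `j_X = 𝟙 (W ⨯ X)` is `M.η (W ⨯ X)`. -/
noncomputable def strength (W X : C) : W ⨯ M.obj X ⟶ M.obj (W ⨯ X) :=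
  L.bind W (M.η (W ⨯ X))

lemma strength_comp_kbind (W : C) {X Y : C} (f : W ⨯ X ⟶ M.obj Y) :
    L.strength W X ≫ M.bind f = L.bind W f := by
  rw [strength, bind_comp_kbind, M.η_bind]

lemma map_η_strength (W X : C) : prod.map (𝟙 W) (M.η X) ≫ L.strength W X = M.η (W ⨯ X) :=
  L.map_η_bind W _

lemma map_kbind_strength (W : C) {X Y : C} (f : X ⟶ M.obj Y) :
    prod.map (𝟙 W) (M.bind f) ≫ L.strength W Y
      = L.strength W X ≫ M.bind (prod.map (𝟙 W) f ≫ L.strength W Y) := by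
  have hmap : prod.map (𝟙 W) (M.bind f) = prod.lift prod.fst (L.bind W (prod.snd ≫ f)) := by
    rw [L.bind_snd, prod.lift_fst_snd_comp]
  rw [hmap, strength, ← L.bind_bind, prod.lift_fst_snd_comp, strength_comp_kbind]

lemma map_kmap_strength (W : C) {X Y : C} (g : X ⟶ Y) :
    prod.map (𝟙 W) (M.bind (g ≫ M.η Y)) ≫ L.strength W Y
      = L.strength W X ≫ M.bind (prod.map (𝟙 W) g ≫ M.η (W ⨯ Y)) := by
  have hsplit :
      prod.map (𝟙 W) (g ≫ M.η Y) = prod.map (𝟙 W) g ≫ prod.map (𝟙 W) (M.η Y) := by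
    simp
  rw [map_kbind_strength, hsplit, Category.assoc, map_η_strength]

lemma map_id_strength {W V : C} (k : W ⟶ V) (X : C) :
    prod.map k (𝟙 (M.obj X)) ≫ L.strength V X
      = L.strength W X ≫ M.bind (prod.map k (𝟙 X) ≫ M.η (V ⨯ X)) := by
  rw [strength, map_bind, strength_comp_kbind]

lemma strength_natural {W W' X X' : C} (k : W ⟶ W') (g : X ⟶ X') :
    prod.map k (M.bind (g ≫ M.η X')) ≫ L.strength W' X'
      = L.strength W X ≫ M.bind (prod.map k g ≫ M.η (W' ⨯ X')) := by
  calc prod.map k (M.bind (g ≫ M.η X')) ≫ L.strength W' X'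
      = prod.map k (𝟙 _) ≫ prod.map (𝟙 W') (M.bind (g ≫ M.η X')) ≫
          L.strength W' X' := by
        simp
    _ = (prod.map k (𝟙 _) ≫ L.strength W' X) ≫ M.bind (prod.map (𝟙 W') g ≫ M.η _) := by
        rw [map_kmap_strength, Category.assoc]
    _ = L.strength W X ≫ M.bind (prod.map k g ≫ M.η (W' ⨯ X')) := by
        rw [map_id_strength, Category.assoc, ← M.bind_bind, Category.assoc, M.η_bind,
          prod.map_map_assoc, Category.comp_id, Category.id_comp]

lemma strength_unitor (X : C) :
    L.strength (⊤_ C) X ≫ M.bind (prod.snd ≫ M.η X) = prod.snd := by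
  rw [strength_comp_kbind, bind_snd, M.bind_η, Category.comp_id]

lemma strength_assoc (W X Y : C) :
    (prod.associator W X (M.obj Y)).hom ≫ prod.map (𝟙 W) (L.strength X Y) ≫
        L.strength W (X ⨯ Y) ≫ M.bind ((prod.associator W X Y).inv ≫ M.η ((W ⨯ X) ⨯ Y))
      = L.strength (W ⨯ X) Y := by
  -- both strengths are reindexed to the slice over `W ⨯ X`, along `prod.snd` and `prod.fst`
  have hinner : (prod.associator W X (M.obj Y)).hom ≫ prod.map (𝟙 W) (L.strength X Y)
      = prod.lift prod.fst (L.bind (W ⨯ X) (prod.map prod.snd (𝟙 Y) ≫ M.η (X ⨯ Y)))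
          ≫ prod.map prod.fst (𝟙 (M.obj (X ⨯ Y))) := by
    rw [strength, ← map_bind]
    ext
    · simp [prod.lift_fst]
    · simp [prod.lift_snd]
      rw [← prod.lift_fst_comp_snd_comp, Category.comp_id]
  have hassoc : prod.lift prod.fst (prod.map prod.snd (𝟙 Y)) ≫
      prod.map prod.fst (𝟙 (X ⨯ Y)) = (prod.associator W X Y).hom := by
    ext <;> simp [prod.lift_fst, prod.lift_snd]
  rw [strength_comp_kbind, reassoc_of% hinner, map_bind, ← bind_bind, lift_comp_η_bind,
    reassoc_of% hassoc, Iso.hom_inv_id_assoc, strength]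

noncomputable def toSMonad : SMonad C where
  toKMonad := M
  τ := L.strength
  τ_natural := L.strength_natural
  τ_η := L.map_η_strength
  τ_bind := L.map_kbind_strength _
  τ_unitor := L.strength_unitor
  τ_assoc := L.strength_assoc

end SliceLifting

theorem strong_of_coherent_slice_extensions_general {C : Type u} [Category.{v} C]
    [HasFiniteProducts C] (M : KMonad C)
    (ηW : ∀ (W X : C), W ⨯ X ⟶ M.obj X)
    (bW : ∀ (W : C) {X Y : C}, (W ⨯ X ⟶ M.obj Y) → (W ⨯ M.obj X ⟶ M.obj Y))
    -- each (T^W, ηW, bW) is a monad on C[W] (Kleisli-triple laws in C-terms):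
    (h2 : ∀ (W : C) {X Y : C} (f : W ⨯ X ⟶ M.obj Y),
        prod.lift prod.fst (ηW W X) ≫ bW W f = f)
    (h3 : ∀ (W : C) {X Y Z : C} (f : W ⨯ X ⟶ M.obj Y) (g : W ⨯ Y ⟶ M.obj Z),
        bW W (prod.lift prod.fst f ≫ bW W g) = prod.lift prod.fst (bW W f) ≫ bW W g)
    -- T^W lifts T along the co-Kleisli adjunction (J^W preserves η and bind):
    (h4 : ∀ W X : C, ηW W X = prod.snd ≫ M.η X)
    (h5 : ∀ (W : C) {X Y : C} (f : X ⟶ M.obj Y),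
        bW W (prod.snd ≫ f) = prod.snd ≫ M.bind f)
    -- coherence: each C[k] preserves the monad structure:
    (h7 : ∀ {W V : C} (k : W ⟶ V) {X Y : C} (f : V ⨯ X ⟶ M.obj Y),
        prod.map k (𝟙 (M.obj X)) ≫ bW V f = bW W (prod.map k (𝟙 X) ≫ f)) :
    ∃ S : SMonad C, S.toKMonad = M ∧
      ∀ W X : C,
        HEq (S.τ W X) (bW W (prod.lift prod.fst (𝟙 (W ⨯ X)) ≫ ηW W (W ⨯ X))) := by
  have hunit (W X : C) : prod.lift prod.fst (ηW W X) = prod.map (𝟙 W) (M.η X) := by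
    rw [h4, prod.lift_fst_snd_comp]
  let L : SliceLifting M :=
    { bind := bW
      map_η_bind := fun W _ _ f => by rw [← hunit]; exact h2 W f
      bind_bind := h3
      bind_snd := h5
      map_bind := h7 }
  refine ⟨L.toSMonad, rfl, fun W X => heq_of_eq ?_⟩
  show bW W (M.η (W ⨯ X)) = _
  rw [h4, prod.lift_snd_assoc, Category.id_comp]

/-- If a monad `T` on a distributive category `C` extends coherently to monads
`T^W` on all simple slices `C[W]` — here presented by their units
`ηW W X : X ⟶ T^W X` and Kleisli liftings `bW` in terms of `C`, lifting `T`
along the co-Kleisli adjunction (so `J^W` preserves the monad structure, and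
in particular `T^1` agrees with `T` under `C ≅ C[1]`) and coherent with the
functors `C[k]` — then `T` is a strong monad, with strength
`τ_{W,X} = T^W j_X` where `j_X` is the identity `W×X ⟶ W×X` viewed as a
`C[W]`-morphism `X ⟶ W×X`. -/
theorem strong_of_coherent_slice_extensions {C : Type u} [Category.{v} C]
    [HasFiniteProducts C] [HasFiniteCoproducts C] [Distributive C] (M : KMonad C)
    (ηW : ∀ (W X : C), W ⨯ X ⟶ M.obj X)
    (bW : ∀ (W : C) {X Y : C}, (W ⨯ X ⟶ M.obj Y) → (W ⨯ M.obj X ⟶ M.obj Y))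
    -- each (T^W, ηW, bW) is a monad on C[W] (Kleisli-triple laws in C-terms):
    (h1 : ∀ W X : C, bW W (ηW W X) = prod.snd)
    (h2 : ∀ (W : C) {X Y : C} (f : W ⨯ X ⟶ M.obj Y),
        prod.lift prod.fst (ηW W X) ≫ bW W f = f)
    (h3 : ∀ (W : C) {X Y Z : C} (f : W ⨯ X ⟶ M.obj Y) (g : W ⨯ Y ⟶ M.obj Z),
        bW W (prod.lift prod.fst f ≫ bW W g) = prod.lift prod.fst (bW W f) ≫ bW W g)
    -- T^W lifts T along the co-Kleisli adjunction (J^W preserves η and bind):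
    (h4 : ∀ W X : C, ηW W X = prod.snd ≫ M.η X)
    (h5 : ∀ (W : C) {X Y : C} (f : X ⟶ M.obj Y),
        bW W (prod.snd ≫ f) = prod.snd ≫ M.bind f)
    -- coherence: each C[k] preserves the monad structure:
    (h6 : ∀ {W V : C} (k : W ⟶ V) (X : C), prod.map k (𝟙 X) ≫ ηW V X = ηW W X)
    (h7 : ∀ {W V : C} (k : W ⟶ V) {X Y : C} (f : V ⨯ X ⟶ M.obj Y),
        prod.map k (𝟙 (M.obj X)) ≫ bW V f = bW W (prod.map k (𝟙 X) ≫ f)) :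
    ∃ S : SMonad C, S.toKMonad = M ∧
      ∀ W X : C,
        HEq (S.τ W X) (bW W (prod.lift prod.fst (𝟙 (W ⨯ X)) ≫ ηW W (W ⨯ X))) :=
  strong_of_coherent_slice_extensions_general M ηW bW h2 h3 h4 h5 h7
end

section
/- Let T be a strongly guarded monad on a distributive category C and suppose (A_σ, ι_σ) is a greatest σ-algebra for a summand σ of A. Then there is a unique morphism α_σ : T(A_σ) → A_σ such that ι_σ ∘ α_σ = ι_σ*, and the pair (A_σ, α_σ) is an Eilenberg–Moore T-algebra which ι_σ exhibits as a T-subalgebra of the free algebra (TA, μ_A). -/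
/-! Kleisli composition with a `σ`-guarded morphism is again `σ`-guarded (by (trv) and (cmp)),
so both `ι_σ*` and every `a ≫ ι_σ` factor through `ι_σ`. Uniqueness of these factorisations
makes `ι_σ` a monomorphism, and the Eilenberg–Moore laws for `α_σ` follow by cancelling `ι_σ`
from the corresponding laws of the free algebra `(TA, μ_A)`. -/

open CategoryTheory Limits

universe v u

variable (C : Type u) [Category.{v} C] [HasFiniteProducts C] [HasFiniteCoproducts C]

variable {C}

variable (C)

variable {C}

variable (C)

/-- A greatest `σ`-algebra: an object `carrier` with a `σ`-guarded morphism
`ι : carrier ⟶ TA` through which every `σ`-guarded morphism into `TA` factors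
uniquely. -/
structure GreatestAlg [Distributive C] (M : SMonad C) (G : GuardStruct C M)
    {A' A : C} (σ : Summand C A' A) where
  carrier : C
  ι : carrier ⟶ M.obj A
  guarded : G.Guarded ι σ
  factor : ∀ {X : C} (f : X ⟶ M.obj A), G.Guarded f σ →
      ∃! fh : X ⟶ carrier, f = fh ≫ ι

section KleisliTriple

variable {D : Type*} [Category D] (M : KMonad D)

theorem KMonad.map_comp_bind_s13 {X Y Z : D} (f : X ⟶ Y) (g : Y ⟶ M.obj Z) :
    M.map f ≫ M.bind g = M.bind (f ≫ g) := by
  rw [KMonad.map, ← M.bind_bind, Category.assoc, M.η_bind]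

theorem KMonad.bind_eq_map_comp_bind_id {X Y : D} (f : X ⟶ M.obj Y) :
    M.bind f = M.map f ≫ M.bind (𝟙 (M.obj Y)) := by
  rw [M.map_comp_bind_s13, Category.comp_id]

theorem KMonad.bind_id_comp_bind {X Y : D} (f : X ⟶ M.obj Y) :
    M.bind (𝟙 (M.obj X)) ≫ M.bind f = M.bind (M.bind f) := by
  rw [← M.bind_bind, Category.id_comp]

end KleisliTriple

namespace GuardStruct

variable {C} [Distributive C] {M : SMonad C} (G : GuardStruct C M)

theorem guarded_comp_bind {X Y V' V : C} (f : X ⟶ M.obj Y) {g : Y ⟶ M.obj V}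
    {σ : Summand C V' V} (hg : G.Guarded g σ) : G.Guarded (f ≫ M.bind g) σ := by
  -- `f ≫ T inl` is guarded in the right summand of `Y ⨿ Y` by (trv), and `[g, g]* ∘ T inl = g*`.
  have h := G.cmp _ g g σ (G.trv (Z := Y) f) hg
  rwa [Category.assoc, KMonad.map_comp_bind_s13, coprod.inl_desc] at h

theorem guarded_comp {X Y V' V : C} (a : X ⟶ Y) {g : Y ⟶ M.obj V} {σ : Summand C V' V}
    (hg : G.Guarded g σ) : G.Guarded (a ≫ g) σ := by
  simpa only [Category.assoc, M.η_bind] using G.guarded_comp_bind (a ≫ M.η Y) hg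

theorem guarded_bind {Y V' V : C} {g : Y ⟶ M.obj V} {σ : Summand C V' V}
    (hg : G.Guarded g σ) : G.Guarded (M.bind g) σ := by
  simpa only [Category.id_comp] using G.guarded_comp_bind (𝟙 (M.obj Y)) hg

end GuardStruct

namespace GreatestAlg

variable {C} [Distributive C] {M : SMonad C} {G : GuardStruct C M} {A' A : C}
  {σ : Summand C A' A} (P : GreatestAlg C M G σ)

theorem mono_ι : Mono P.ι where
  right_cancellation a b hab := by
    obtain ⟨c, -, hc⟩ := P.factor (a ≫ P.ι) (G.guarded_comp a P.guarded)
    rw [hc a rfl, hc b hab]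

theorem existsUnique_comp_ι_eq_bind :
    ∃! α : M.obj P.carrier ⟶ P.carrier, α ≫ P.ι = M.bind P.ι := by
  obtain ⟨α, hα, hαu⟩ := P.factor (M.bind P.ι) (G.guarded_bind P.guarded)
  exact ⟨α, hα.symm, fun β hβ => hαu β hβ.symm⟩

variable {P} {α : M.obj P.carrier ⟶ P.carrier}

theorem η_comp_eq_id (hα : α ≫ P.ι = M.bind P.ι) : M.η P.carrier ≫ α = 𝟙 P.carrier :=
  P.mono_ι.right_cancellation _ _ <| by
    rw [Category.assoc, hα, M.η_bind, Category.id_comp]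

theorem bind_id_comp_eq_map_comp (hα : α ≫ P.ι = M.bind P.ι) :
    M.bind (𝟙 (M.obj P.carrier)) ≫ α = M.map α ≫ α :=
  P.mono_ι.right_cancellation _ _ <| by
    rw [Category.assoc, Category.assoc, hα, KMonad.bind_id_comp_bind, KMonad.map_comp_bind_s13, hα]

end GreatestAlg

/-- If `(A_σ, ι_σ)` is a greatest `σ`-algebra, then there is a unique
`α : T A_σ ⟶ A_σ` with `ι_σ ∘ α = ι_σ*`, and `(A_σ, α)` is an Eilenberg–Moore
`T`-algebra which `ι_σ` exhibits as a `T`-subalgebra of the free algebra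
`(TA, μ_A)`. -/
theorem greatest_sigma_algebra_em {C : Type u} [Category.{v} C] [HasFiniteProducts C]
    [HasFiniteCoproducts C] [Distributive C] (M : SMonad C) (G : GuardStruct C M)
    {A' A : C} (σ : Summand C A' A) (P : GreatestAlg C M G σ) :
    (∃! α : M.obj P.carrier ⟶ P.carrier, α ≫ P.ι = M.bind P.ι)
    ∧ ∀ α : M.obj P.carrier ⟶ P.carrier, α ≫ P.ι = M.bind P.ι →
        -- (A_σ, α) is an Eilenberg–Moore T-algebra
        (M.η P.carrier ≫ α = 𝟙 P.carrier)
        ∧ (M.bind (𝟙 (M.obj P.carrier)) ≫ α = M.toKMonad.map α ≫ α)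
        -- which ι exhibits as a T-subalgebra of (TA, μ_A)
        ∧ Mono P.ι
        ∧ (α ≫ P.ι = M.toKMonad.map P.ι ≫ M.bind (𝟙 (M.obj A))) := by
  refine ⟨P.existsUnique_comp_ι_eq_bind, fun _ hα => ⟨?_, ?_, P.mono_ι, ?_⟩⟩
  · exact GreatestAlg.η_comp_eq_id hα
  · exact GreatestAlg.bind_id_comp_eq_map_comp hα
  · exact hα.trans (M.bind_eq_map_comp_bind_id P.ι)
end

section
/- Let T be a strongly guarded monad on a distributive category C and suppose a greatest σ-algebra (A_σ, ι_σ) exists for a summand σ of A. Then (a) ι_σ is the greatest element in the class of σ-guarded subobjects of TA, i.e. every σ-guarded monomorphism into TA factors through ι_σ; and (b) for every regular epimorphism e : X → Y and every morphism f : Y → TA, if f ∘ e is σ-guarded then f is σ-guarded. -/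
open CategoryTheory Limits

universe v u

variable (C : Type u) [Category.{v} C] [HasFiniteProducts C] [HasFiniteCoproducts C]

variable {C}

variable (C)

variable {C}

variable (C)

/-- If a greatest `σ`-algebra `(A_σ, ι_σ)` exists, then (a) `ι_σ` is the
greatest element in the class of `σ`-guarded subobjects of `TA`, i.e. every
`σ`-guarded monomorphism into `TA` factors through `ι_σ`, and (b) for every
regular epimorphism `e : X ⟶ Y` and every `f : Y ⟶ TA`, if `f ∘ e` is
`σ`-guarded then so is `f`. -/
theorem greatest_sigma_algebra_props {C : Type u} [Category.{v} C] [HasFiniteProducts C]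
    [HasFiniteCoproducts C] [Distributive C] (M : SMonad C) (G : GuardStruct C M)
    {A' A : C} (σ : Summand C A' A) (P : GreatestAlg C M G σ) :
    (∀ {X : C} (m : X ⟶ M.obj A), Mono m → G.Guarded m σ →
        ∃ u : X ⟶ P.carrier, m = u ≫ P.ι)
    ∧ (∀ {X Y : C} (e : X ⟶ Y) (f : Y ⟶ M.obj A), RegularEpi e →
        G.Guarded (e ≫ f) σ → G.Guarded f σ) := by
  -- Guardedness is closed under precomposition with arbitrary morphisms.
  have pre : ∀ {X Y : C} (p : X ⟶ Y) (g : Y ⟶ M.obj A),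
      G.Guarded g σ → G.Guarded (p ≫ g) σ := by
    intro X Y p g hg
    have h1 : G.Guarded ((p ≫ M.η Y) ≫ M.toKMonad.map (coprod.inl : Y ⟶ Y ⨿ Y))
        (Summand.inrS C Y Y) := G.trv _
    have h2 := G.cmp _ g g σ h1 hg
    have he : ((p ≫ M.η Y) ≫ M.toKMonad.map (coprod.inl : Y ⟶ Y ⨿ Y)) ≫
        M.bind (coprod.desc g g) = p ≫ g := by
      simp only [KMonad.map, Category.assoc, ← M.bind_bind, M.η_bind, coprod.inl_desc]
    rwa [he] at h2
  -- `ι` is a monomorphism.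
  have mono_ι : ∀ {X : C} (a b : X ⟶ P.carrier), a ≫ P.ι = b ≫ P.ι → a = b := by
    intro X a b hab
    obtain ⟨fh, _, huniq⟩ := P.factor (a ≫ P.ι) (pre a P.ι P.guarded)
    exact (huniq a rfl).trans (huniq b hab).symm
  constructor
  · intro X m _ hm
    obtain ⟨u, hu, -⟩ := P.factor m hm
    exact ⟨u, hu⟩
  · intro X Y e f re hef
    obtain ⟨h, hh, -⟩ := P.factor (e ≫ f) hef
    -- `h` coequalizes the kernel pair of `e`.
    have hw : re.left ≫ h = re.right ≫ h := by
      apply mono_ι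
      have := re.w
      calc (re.left ≫ h) ≫ P.ι = re.left ≫ e ≫ f := by rw [Category.assoc, ← hh]
        _ = re.right ≫ e ≫ f := by rw [← Category.assoc, this, Category.assoc]
        _ = (re.right ≫ h) ≫ P.ι := by rw [Category.assoc, hh]
    -- Descend `h` along the coequalizer `e`.
    let k : Y ⟶ P.carrier := Cofork.IsColimit.desc re.isColimit h hw
    have hk : e ≫ k = h := Cofork.IsColimit.π_desc re.isColimit
    have hf : f = k ≫ P.ι := by
      haveI : Epi e := re.epi
      apply (cancel_epi e).mp
      rw [hh, ← hk, Category.assoc]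
    rw [hf]
    exact pre k P.ι P.guarded
end

section
/- Let T be a strongly guarded monad on a distributive category C in which every morphism factors as a regular epimorphism followed by a monomorphism. Let σ be a summand of A and suppose ι_σ : A_σ → TA is a σ-guarded morphism such that (a) ι_σ is the greatest σ-guarded subobject of TA (every σ-guarded monomorphism into TA factors through ι_σ), and (b) for every regular epimorphism e : X → Y and every f : Y → TA, if f ∘ e is σ-guarded then f is σ-guarded. Then (A_σ, ι_σ) is a greatest σ-algebra: every σ-guarded f : X →_σ TA factors through ι_σ uniquely. -/
open CategoryTheory Limits

universe v u

variable (C : Type u) [Category.{v} C] [HasFiniteProducts C] [HasFiniteCoproducts C]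

variable {C}

variable (C)

variable {C}

variable (C)

/-- Converse: in a category where every morphism factors as a regular
epimorphism followed by a monomorphism, if `ι_σ : A_σ ⟶ TA` is a `σ`-guarded
monomorphism which (a) is the greatest `σ`-guarded subobject of `TA` and
(b) satisfies that `f ∘ e` `σ`-guarded implies `f` `σ`-guarded for every
regular epi `e`, then `(A_σ, ι_σ)` is a greatest `σ`-algebra. -/
theorem greatest_sigma_algebra_of_props {C : Type u} [Category.{v} C]
    [HasFiniteProducts C] [HasFiniteCoproducts C] [Distributive C]
    (M : SMonad C) (G : GuardStruct C M)
    (hfact : ∀ {X Y : C} (f : X ⟶ Y), ∃ (Z : C) (e : X ⟶ Z) (m : Z ⟶ Y),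
        Nonempty (RegularEpi e) ∧ Mono m ∧ e ≫ m = f)
    {A' A : C} (σ : Summand C A' A) {Aσ : C} (ι : Aσ ⟶ M.obj A)
    (hι : G.Guarded ι σ) (hmono : Mono ι)
    (ha : ∀ {X : C} (m : X ⟶ M.obj A), Mono m → G.Guarded m σ →
        ∃ u : X ⟶ Aσ, m = u ≫ ι)
    (hb : ∀ {X Y : C} (e : X ⟶ Y) (f : Y ⟶ M.obj A), RegularEpi e →
        G.Guarded (e ≫ f) σ → G.Guarded f σ) :
    ∀ {X : C} (f : X ⟶ M.obj A), G.Guarded f σ →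
      ∃! u : X ⟶ Aσ, f = u ≫ ι := by
  intro X f hf
  obtain ⟨Z, e, m, ⟨re⟩, hm, hem⟩ := hfact f
  have hmg : G.Guarded m σ := hb e m re (hem ▸ hf)
  obtain ⟨u, hu⟩ := ha m hm hmg
  refine ⟨e ≫ u, ?_, fun v hv => ?_⟩
  · show f = (e ≫ u) ≫ ι
    rw [Category.assoc, ← hu, hem]
  · simp only at hv
    apply (cancel_mono ι).mp
    rw [← hv, Category.assoc, ← hu, hem]
end

section
/- Let T be the functor on sets defined (up to the evident coproduct encoding) by T X = (X × List ℕ) ⊕ Stream ℕ, with unit η x = inl (x, []) and Kleisli extension f* given for f : X → TY by: f*(inl (x, τ)) = inl (y, τ ++ τ') if f x = inl (y, τ'); f*(inl (x, τ)) = inr (τ ++ π) if f x = inr π; and f*(inr π) = inr π. Call f : X → T(Y ⊕ X) guarded if whenever f x = inl (inr x', τ) then τ ≠ []. Then for every guarded f : X → T(Y ⊕ X) there exists a unique g : X → TY satisfying the fixpoint law g = [η, g]* ∘ f, i.e. for all x: if f x = inl (inl y, τ) then g x = inl (y, τ); if f x = inl (inr x', τ) then g x = inl (y', τ ++ τ')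 when g x' = inl (y', τ') and g x = inr (τ ++ π) when g x' = inr π; and if f x = inr π then g x = inr π. Explicitly, g x is computed by following the sequence x = x₀, x₁, x₂, … with f xᵢ = inl (inr xᵢ₊₁, τᵢ₊₁): if the sequence terminates with f xₙ = inl (inl y, τₙ₊₁) then g x = inl (y, τ₁ ++ ⋯ ++ τₙ₊₁); if it terminates with f xₙ = inr π then g x = inr (τ₁ ++ ⋯ ++ τₙ ++ π); and if it is infinite then g x = inr (τ₁ ++ τ₂ ++ ⋯), which is an infinite stream since guardedness makes each τᵢ nonempty. -/
/-- The monad `T X = (X × List ℕ) ⊕ Stream' ℕ` of finite-trace values and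
infinite traces. -/
def TT (X : Type) : Type :=
  (X × List ℕ) ⊕ Stream' ℕ

/-- The unit: `η x = inl (x, [])`. -/
def ηT {X : Type} (x : X) : TT X :=
  Sum.inl (x, [])

/-- The Kleisli extension of `f : X → TT Y`. -/
def bindT {X Y : Type} (f : X → TT Y) : TT X → TT Y
  | Sum.inl (x, τ) =>
      match f x with
      | Sum.inl (y, τ') => Sum.inl (y, τ ++ τ')
      | Sum.inr π => Sum.inr (Stream'.appendStream' τ π)
  | Sum.inr π => Sum.inr π

/-- `f : X → T(Y ⊕ X)` is guarded if every continuation-state is preceded by a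
nonempty output trace. -/
def guardedT {X Y : Type} (f : X → TT (Y ⊕ X)) : Prop :=
  ∀ x x' τ, f x = Sum.inl (Sum.inr x', τ) → τ ≠ []

/-- The trace `t 0 ++ ⋯ ++ t (n-1)` collected in the first `n` iteration
steps. -/
def traceUpTo (t : ℕ → List ℕ) (n : ℕ) : List ℕ :=
  ((List.range n).map t).flatten

/-!
Iterating `f` is iterating the Kleisli extension `stepT f = [η ∘ inl, f]*` on `T (Y ⊕ X)`,
starting from `η (inr x)`. By associativity of `bindT`, every fixpoint `g` is invariant under
this step, so `g x = τ ++ g z` whenever the iteration reaches the state `z` after printing `τ`.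
This determines `g x` when the iteration halts; otherwise guardedness makes the printed
prefixes grow without bound, and `g x` must be the stream they converge to. The same
dichotomy shows that every state has exactly one such result, and picking it defines the
fixpoint.
-/

theorem Stream'.exists_forall_take_eq {α : Type*} {l : ℕ → List α}
    (hpre : ∀ n, l n <+: l (n + 1)) (hlen : ∀ n, n ≤ (l n).length) :
    ∃ π : Stream' α, ∀ n, π.take (l n).length = l n := by
  have hmono : ∀ {m n}, m ≤ n → l m <+: l n := by
    intro m n h
    induction h with
    | refl => exact List.prefix_refl _
    | step _ ih => exact ih.trans (hpre _)
  let π : Stream' α := fun k => (l (k + 1))[k]'(hlen (k + 1))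
  refine ⟨π, fun n => List.ext_getElem (Stream'.length_take _ _) fun k hk _ => ?_⟩
  rw [Stream'.take_get]
  rcases le_total (k + 1) n with h | h
  · exact (hmono h).getElem _
  · exact ((hmono h).getElem _).symm

section Monad

variable {X Y : Type}

def prependT (a : List ℕ) : TT X → TT X
  | Sum.inl (x, τ) => Sum.inl (x, a ++ τ)
  | Sum.inr π => Sum.inr (a ++ₛ π)

def mapT (g : X → Y) : TT X → TT Y
  | Sum.inl (x, τ) => Sum.inl (g x, τ)
  | Sum.inr π => Sum.inr π

@[simp]
lemma prependT_nil (r : TT X) : prependT [] r = r := by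
  rcases r with ⟨x, τ⟩ | π <;> rfl

@[simp]
lemma prependT_prependT (a b : List ℕ) (r : TT X) :
    prependT a (prependT b r) = prependT (a ++ b) r := by
  rcases r with ⟨x, τ⟩ | π <;> simp [prependT, TT]

lemma prependT_mapT (a : List ℕ) (g : X → Y) (r : TT X) :
    prependT a (mapT g r) = mapT g (prependT a r) := by
  rcases r with ⟨x, τ⟩ | π <;> rfl

lemma prependT_eq_inl {a b : List ℕ} {r : TT X} {x : X} (h : prependT a r = Sum.inl (x, b)) :
    ∃ c, r = Sum.inl (x, c) ∧ b = a ++ c := by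
  rcases r with ⟨x', τ⟩ | π <;> simp_all [prependT, TT]

lemma prependT_eq_inr {a : List ℕ} {r : TT X} {π : Stream' ℕ} (h : prependT a r = Sum.inr π) :
    ∃ π', r = Sum.inr π' ∧ π = a ++ₛ π' := by
  rcases r with ⟨x', τ⟩ | π <;> simp_all [prependT, TT]

lemma prependT_ηT (a : List ℕ) (x : X) : prependT a (ηT x) = Sum.inl (x, a) := by
  simp [prependT, ηT, TT]

lemma mapT_injective {g : X → Y} (hg : g.Injective) : (mapT g).Injective := by
  rintro (⟨x, τ⟩ | π) (⟨x', τ'⟩ | π') h <;> simp_all [mapT, TT, hg.eq_iff]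

lemma bindT_inl (h : X → TT Y) (x : X) (τ : List ℕ) :
    bindT h (Sum.inl (x, τ)) = prependT τ (h x) := by
  simp only [bindT]
  split <;> simp_all [prependT, TT]

@[simp]
lemma bindT_ηT (h : X → TT Y) (x : X) : bindT h (ηT x) = h x := by
  rw [ηT, bindT_inl, prependT_nil]

lemma bindT_prependT (h : X → TT Y) (a : List ℕ) (r : TT X) :
    bindT h (prependT a r) = prependT a (bindT h r) := by
  rcases r with ⟨x, τ⟩ | π
  · exact (bindT_inl h x (a ++ τ)).trans (by rw [bindT_inl, prependT_prependT])
  · rfl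

lemma bindT_bindT {Z : Type} (h : Y → TT Z) (k : X → TT Y) (r : TT X) :
    bindT h (bindT k r) = bindT (fun x => bindT h (k x)) r := by
  rcases r with ⟨x, τ⟩ | π
  · simp [bindT_inl, bindT_prependT]
  · rfl

lemma exists_inr_of_forall_prependT {r : TT X} {l : ℕ → List ℕ}
    (hlen : ∀ n, n ≤ (l n).length) (hr : ∀ n, ∃ r', r = prependT (l n) r') :
    ∃ π, r = Sum.inr π ∧ ∀ n, π.take (l n).length = l n := by
  rcases r with ⟨x, σ⟩ | π
  · obtain ⟨r', hr'⟩ := hr (σ.length + 1)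
    obtain ⟨c, -, hσ⟩ := prependT_eq_inl hr'.symm
    have := congrArg List.length hσ
    simp only [List.length_append] at this
    linarith [hlen (σ.length + 1)]
  · refine ⟨π, rfl, fun n => ?_⟩
    obtain ⟨r', hr'⟩ := hr n
    obtain ⟨π', -, rfl⟩ := prependT_eq_inr hr'.symm
    simp [Stream'.take_append_of_le_length]

end Monad

lemma traceUpTo_succ (t : ℕ → List ℕ) (n : ℕ) :
    traceUpTo t (n + 1) = traceUpTo t n ++ t n := by
  simp [traceUpTo, List.range_succ]

lemma le_length_traceUpTo {t : ℕ → List ℕ} {n : ℕ} (ht : ∀ i < n, t i ≠ []) :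
    n ≤ (traceUpTo t n).length := by
  induction n with
  | zero => exact Nat.zero_le _
  | succ n ih =>
    have := List.length_pos_iff.2 (ht n n.lt_succ_self)
    have := ih fun i hi => ht i (by omega)
    rw [traceUpTo_succ, List.length_append]
    omega

section Iteration

variable {X Y : Type} (f : X → TT (Y ⊕ X))

/-- A state `inl (inr z, a)` is still running at `z` after printing `a`; every other state
has the form `mapT inl r` and is final with result `r`. -/
def stepT : TT (Y ⊕ X) → TT (Y ⊕ X) :=
  bindT (Sum.elim (ηT ∘ Sum.inl) f)

def Yields (s : TT (Y ⊕ X)) (r : TT Y) : Prop :=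
  (∃ n, (stepT f)^[n] s = mapT Sum.inl r) ∨
    ∃ π, r = Sum.inr π ∧
      ∀ n, ∃ z a, (stepT f)^[n] s = Sum.inl (Sum.inr z, a) ∧ π.take a.length = a

variable {f}

lemma stepT_ηT_inr (x : X) : stepT f (ηT (Sum.inr x)) = f x :=
  bindT_ηT _ _

lemma stepT_inl_inr (z : X) (a : List ℕ) :
    stepT f (Sum.inl (Sum.inr z, a)) = prependT a (f z) :=
  bindT_inl _ _ _

lemma stepT_mapT_inl (r : TT Y) : stepT f (mapT Sum.inl r) = mapT Sum.inl r := by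
  rcases r with ⟨y, τ⟩ | π
  · exact (bindT_inl _ _ _).trans (prependT_ηT τ (Sum.inl y))
  · rfl

lemma iterate_stepT_prependT (n : ℕ) (a : List ℕ) (s : TT (Y ⊕ X)) :
    (stepT f)^[n] (prependT a s) = prependT a ((stepT f)^[n] s) :=
  ((Function.Semiconj.iterate_right (f := prependT a)
    (fun s => (bindT_prependT _ a s).symm) n) s).symm

lemma iterate_stepT_of_le {n m : ℕ} {s : TT (Y ⊕ X)} {r : TT Y}
    (h : (stepT f)^[n] s = mapT Sum.inl r) (hnm : n ≤ m) :
    (stepT f)^[m] s = mapT Sum.inl r := by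
  obtain ⟨k, rfl⟩ := Nat.exists_eq_add_of_le hnm
  rw [add_comm, Function.iterate_add_apply, h, Function.iterate_fixed (stepT_mapT_inl r)]

lemma eq_mapT_inl_or_eq_inl_inr (s : TT (Y ⊕ X)) :
    (∃ r, s = mapT Sum.inl r) ∨ ∃ z a, s = Sum.inl (Sum.inr z, a) := by
  rcases s with ⟨y | z, a⟩ | π
  · exact Or.inl ⟨Sum.inl (y, a), rfl⟩
  · exact Or.inr ⟨z, a, rfl⟩
  · exact Or.inl ⟨Sum.inr π, rfl⟩

lemma mapT_inl_ne_inl_inr (r : TT Y) (z : X) (a : List ℕ) :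
    mapT Sum.inl r ≠ Sum.inl (Sum.inr z, a) := by
  rcases r with ⟨y, τ⟩ | π <;> simp [mapT, TT]

lemma bindT_elim_mapT_inl (g : X → TT Y) (r : TT Y) :
    bindT (Sum.elim ηT g) (mapT Sum.inl r) = r := by
  rcases r with ⟨y, τ⟩ | π
  · exact (bindT_inl _ _ _).trans (prependT_ηT τ y)
  · rfl

lemma iterate_stepT_terminal_or_running (s : TT (Y ⊕ X)) :
    (∃ n r, (stepT f)^[n] s = mapT Sum.inl r) ∨
      ∀ n, ∃ z a, (stepT f)^[n] s = Sum.inl (Sum.inr z, a) :=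
  or_iff_not_imp_left.2 fun h n =>
    (eq_mapT_inl_or_eq_inl_inr _).resolve_left fun ⟨r, hr⟩ => h ⟨n, r, hr⟩

lemma le_length_of_iterate_stepT_eq (hf : guardedT f) {n : ℕ} {s : TT (Y ⊕ X)} {z : X}
    {a : List ℕ} (h : (stepT f)^[n] s = Sum.inl (Sum.inr z, a)) : n ≤ a.length := by
  induction n generalizing z a with
  | zero => exact Nat.zero_le _
  | succ n ih =>
    rw [Function.iterate_succ_apply'] at h
    rcases eq_mapT_inl_or_eq_inl_inr ((stepT f)^[n] s) with ⟨r, hr⟩ | ⟨z', a', hs⟩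
    · rw [hr, stepT_mapT_inl] at h
      exact absurd h (mapT_inl_ne_inl_inr _ _ _)
    · rw [hs, stepT_inl_inr] at h
      obtain ⟨τ, hτ, rfl⟩ := prependT_eq_inl h
      have := List.length_pos_iff.2 (hf _ _ _ hτ)
      have := ih hs
      simp only [List.length_append]
      omega

lemma yields_mapT_inl (r : TT Y) : Yields f (mapT Sum.inl r) r :=
  Or.inl ⟨0, rfl⟩

lemma Yields.prependT {s : TT (Y ⊕ X)} {r : TT Y} (h : Yields f s r) (a : List ℕ) :
    Yields f (prependT a s) (prependT a r) := by
  rcases h with ⟨n, hn⟩ | ⟨π, rfl, hπ⟩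
  · exact Or.inl ⟨n, by rw [iterate_stepT_prependT, hn, prependT_mapT]⟩
  · refine Or.inr ⟨a ++ₛ π, rfl, fun n => ?_⟩
    obtain ⟨z, b, hn, hb⟩ := hπ n
    refine ⟨z, a ++ b, by rw [iterate_stepT_prependT, hn]; rfl, ?_⟩
    rw [List.length_append, ← Stream'.append_take, hb]

lemma Yields.stepT {s : TT (Y ⊕ X)} {r : TT Y} (h : Yields f s r) :
    Yields f (stepT f s) r := by
  rcases h with ⟨n, hn⟩ | ⟨π, rfl, hπ⟩
  · refine Or.inl ⟨n, ?_⟩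
    rw [← Function.iterate_succ_apply, Function.iterate_succ_apply', hn, stepT_mapT_inl]
  · exact Or.inr ⟨π, rfl, fun n => hπ (n + 1)⟩

lemma Yields.unique (hf : guardedT f) {s : TT (Y ⊕ X)} {r r' : TT Y}
    (h : Yields f s r) (h' : Yields f s r') : r = r' := by
  rcases h with ⟨n, hn⟩ | ⟨π, rfl, hπ⟩ <;> rcases h' with ⟨m, hm⟩ | ⟨π', rfl, hπ'⟩
  · exact mapT_injective Sum.inl_injective <|
      (iterate_stepT_of_le hn (le_max_left n m)).symm.trans
        (iterate_stepT_of_le hm (le_max_right n m))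
  · obtain ⟨z, a, ha, -⟩ := hπ' n
    exact absurd (hn.symm.trans ha) (mapT_inl_ne_inl_inr _ _ _)
  · obtain ⟨z, a, ha, -⟩ := hπ m
    exact absurd (hm.symm.trans ha) (mapT_inl_ne_inl_inr _ _ _)
  · refine congrArg Sum.inr (Stream'.take_theorem _ _ fun n => ?_)
    obtain ⟨z, a, ha, hπa⟩ := hπ n
    obtain ⟨z', a', ha', hπa'⟩ := hπ' n
    obtain ⟨-, rfl⟩ : z = z' ∧ a = a' := by simpa [TT] using ha.symm.trans ha'
    have hn := le_length_of_iterate_stepT_eq hf ha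
    calc π.take n = (π.take a.length).take n := by rw [Stream'.take_take, min_eq_right hn]
      _ = π'.take n := by rw [hπa, ← hπa', Stream'.take_take, min_eq_right hn]

lemma exists_yields (hf : guardedT f) (s : TT (Y ⊕ X)) : ∃ r, Yields f s r := by
  rcases iterate_stepT_terminal_or_running s with ⟨n, r, hn⟩ | hrun
  · exact ⟨r, Or.inl ⟨n, hn⟩⟩
  · choose z a hza using hrun
    have hpre : ∀ n, a n <+: a (n + 1) := fun n => by
      have h := hza (n + 1)
      rw [Function.iterate_succ_apply', hza n, stepT_inl_inr] at h
      obtain ⟨τ, -, hτ⟩ := prependT_eq_inl h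
      exact hτ ▸ List.prefix_append _ _
    obtain ⟨π, hπ⟩ := Stream'.exists_forall_take_eq hpre
      fun n => le_length_of_iterate_stepT_eq hf (hza n)
    exact ⟨Sum.inr π, Or.inr ⟨π, rfl, fun n => ⟨z n, a n, hza n, hπ n⟩⟩⟩

lemma yields_bindT {g : X → TT Y} (hg : ∀ z, Yields f (ηT (Sum.inr z)) (g z))
    (s : TT (Y ⊕ X)) : Yields f s (bindT (Sum.elim ηT g) s) := by
  rcases eq_mapT_inl_or_eq_inl_inr s with ⟨r, rfl⟩ | ⟨z, a, rfl⟩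
  · rw [bindT_elim_mapT_inl]
    exact yields_mapT_inl r
  · rw [bindT_inl, ← prependT_ηT]
    exact (hg z).prependT a

lemma iterate_stepT_of_chain {u : ℕ → X} {t : ℕ → List ℕ} {n : ℕ}
    (hchain : ∀ i < n, f (u i) = Sum.inl (Sum.inr (u (i + 1)), t i)) :
    (stepT f)^[n] (ηT (Sum.inr (u 0))) = Sum.inl (Sum.inr (u n), traceUpTo t n) := by
  induction n with
  | zero => rfl
  | succ n ih =>
    rw [Function.iterate_succ_apply', ih fun i hi => hchain i (by omega), stepT_inl_inr,
      hchain n n.lt_succ_self, traceUpTo_succ]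
    rfl

section Fixpoint

variable {g : X → TT Y} (hg : ∀ x, g x = bindT (Sum.elim ηT g) (f x))
include hg

lemma bindT_iterate_stepT (n : ℕ) (s : TT (Y ⊕ X)) :
    bindT (Sum.elim ηT g) ((stepT f)^[n] s) = bindT (Sum.elim ηT g) s := by
  refine congrFun (Function.iterate_invariant (f := stepT f) (g := bindT (Sum.elim ηT g))
    (funext fun s => ?_) n) s
  rw [Function.comp_apply, stepT, bindT_bindT]
  congr 1
  funext w
  rcases w with y | x
  · exact bindT_ηT _ _
  · exact (hg x).symm

lemma yields_bindT_of_fixpoint (hf : guardedT f) (s : TT (Y ⊕ X)) :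
    Yields f s (bindT (Sum.elim ηT g) s) := by
  rcases iterate_stepT_terminal_or_running s with ⟨n, r, hn⟩ | hrun
  · refine Or.inl ⟨n, ?_⟩
    rw [← bindT_iterate_stepT hg n, hn, bindT_elim_mapT_inl]
  · choose z a hza using hrun
    obtain ⟨π, hπ, htake⟩ := exists_inr_of_forall_prependT (r := bindT (Sum.elim ηT g) s)
      (fun n => le_length_of_iterate_stepT_eq hf (hza n))
      fun n => ⟨g (z n), by rw [← bindT_iterate_stepT hg n, hza n, bindT_inl]; rfl⟩
    exact Or.inr ⟨π, hπ, fun n => ⟨z n, a n, hza n, htake n⟩⟩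

lemma yields_of_fixpoint (hf : guardedT f) (x : X) : Yields f (ηT (Sum.inr x)) (g x) := by
  simpa using yields_bindT_of_fixpoint hg hf (ηT (Sum.inr x))

lemma fixpoint_unique (hf : guardedT f) {g' : X → TT Y}
    (hg' : ∀ x, g' x = bindT (Sum.elim ηT g') (f x)) : g = g' :=
  funext fun x => (yields_of_fixpoint hg hf x).unique hf (yields_of_fixpoint hg' hf x)

lemma eq_prependT_of_chain {u : ℕ → X} {t : ℕ → List ℕ} {n : ℕ}
    (hchain : ∀ i < n, f (u i) = Sum.inl (Sum.inr (u (i + 1)), t i)) :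
    g (u 0) = prependT (traceUpTo t n) (g (u n)) :=
  calc g (u 0) = bindT (Sum.elim ηT g) ((stepT f)^[n] (ηT (Sum.inr (u 0)))) := by
        rw [bindT_iterate_stepT hg, bindT_ηT, Sum.elim_inr]
    _ = prependT (traceUpTo t n) (g (u n)) := by rw [iterate_stepT_of_chain hchain, bindT_inl]; rfl

lemma eq_prependT_of_chain_of_terminal {u : ℕ → X} {t : ℕ → List ℕ} {n : ℕ} {r : TT Y}
    (hchain : ∀ i < n, f (u i) = Sum.inl (Sum.inr (u (i + 1)), t i))
    (hterm : f (u n) = mapT Sum.inl r) :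
    g (u 0) = prependT (traceUpTo t n) r := by
  rw [eq_prependT_of_chain hg hchain, hg (u n), hterm, bindT_elim_mapT_inl]

end Fixpoint

lemma exists_fixpoint (hf : guardedT f) :
    ∃ g : X → TT Y, ∀ x, g x = bindT (Sum.elim ηT g) (f x) := by
  choose g hg using fun x => exists_yields hf (ηT (Sum.inr x))
  refine ⟨g, fun x => ?_⟩
  have hgx := (hg x).stepT
  rw [stepT_ηT_inr] at hgx
  exact hgx.unique hf (yields_bindT hg (f x))

end Iteration

/-- For every guarded `f : X → T(Y ⊕ X)` there is a unique `g : X → T Y`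
satisfying the fixpoint law `g = [η, g]* ∘ f`.  Explicitly, `g x` is computed
by following the sequence `x = u 0, u 1, u 2, …` with
`f (u i) = inl (inr (u (i+1)), t i)`: if it terminates with
`f (u n) = inl (inl y, τ)` then `g x = inl (y, t 0 ++ ⋯ ++ t (n-1) ++ τ)`; if
it terminates with `f (u n) = inr π` then
`g x = inr (t 0 ++ ⋯ ++ t (n-1) ++ π)`; and if it is infinite then `g x` is
the infinite stream extending all the finite traces `t 0 ++ ⋯ ++ t (n-1)`
(an infinite stream, since guardedness makes each `t i` nonempty). -/
theorem unique_guarded_iteration {X Y : Type} (f : X → TT (Y ⊕ X))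
    (hf : guardedT f) :
    (∃! g : X → TT Y, g = fun x => bindT (Sum.elim ηT g) (f x))
    ∧ ∀ g : X → TT Y, (g = fun x => bindT (Sum.elim ηT g) (f x)) →
        ∀ (x : X) (u : ℕ → X) (t : ℕ → List ℕ), u 0 = x →
          (∀ (n : ℕ) (y : Y) (τ : List ℕ),
              (∀ i < n, f (u i) = Sum.inl (Sum.inr (u (i + 1)), t i)) →
              f (u n) = Sum.inl (Sum.inl y, τ) →
              g x = Sum.inl (y, traceUpTo t n ++ τ))
          ∧ (∀ (n : ℕ) (π : Stream' ℕ),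
              (∀ i < n, f (u i) = Sum.inl (Sum.inr (u (i + 1)), t i)) →
              f (u n) = Sum.inr π →
              g x = Sum.inr (Stream'.appendStream' (traceUpTo t n) π))
          ∧ ((∀ i, f (u i) = Sum.inl (Sum.inr (u (i + 1)), t i)) →
              ∃ π : Stream' ℕ, g x = Sum.inr π ∧
                ∀ n, Stream'.take (traceUpTo t n).length π = traceUpTo t n) := by
  refine ⟨?_, fun g hg x u t hu => ?_⟩
  · obtain ⟨g, hg⟩ := exists_fixpoint hf
    exact ⟨g, funext hg, fun g' hg' => fixpoint_unique (congrFun hg') hf hg⟩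
  have hfix : ∀ x, g x = bindT (Sum.elim ηT g) (f x) := congrFun hg
  subst hu
  refine ⟨fun n y τ hchain hterm => ?_, fun n π hchain hterm => ?_, fun hchain => ?_⟩
  · exact eq_prependT_of_chain_of_terminal hfix hchain (r := Sum.inl (y, τ)) hterm
  · exact eq_prependT_of_chain_of_terminal hfix hchain (r := Sum.inr π) hterm
  · exact exists_inr_of_forall_prependT
      (fun n => le_length_traceUpTo fun i _ => hf _ _ _ (hchain i))
      fun n => ⟨_, eq_prependT_of_chain hfix fun i _ => hchain i⟩
end
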